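/- Let H and G be graphs with edges colored by {1,…,k} and let h = C(|V(H)|,2) − 2. If G' is an h-th augmentation of G, then hom(H,G) = Σ_{H' ∈ H^e} hom(H',G'), where H^e denotes the set of all 0-contractions of graphs obtained by recoloring zeros from h-th augmentations of H, hom(H,G) counts homomorphisms of edge-colored undirected graphs, and hom(H',G') counts homomorphisms of edge-colored directed graphs. -/

import Mathlib

/-- A graph on vertex type `V` with edges colored by colors `{1, …, k}`
(represented by `Fin k`): `col u v = some c` means `uv` is an edge of color `c`. -/
structure EColGraph (V : Type) (k : ℕ) where
  col : V → V → Option (Fin k)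
  symm : ∀ u v, col u v = col v u
  irrefl : ∀ v, col v v = none

/-- A directed graph with edges colored by colors `{0, 1, …, k}` (represented by
`Fin (k+1)`, the color `i` of an original edge being represented by `Fin.succ`
and the new color `0` by `0`): edges join distinct vertices and no pair of vertices
is joined in both directions. -/
structure CDigraph (V : Type) (k : ℕ) where
  col : V → V → Option (Fin (k + 1))
  irrefl : ∀ v, col v v = none
  asym : ∀ u v, (col u v).isSome → col v u = none

/-- Two distinct non-adjacent vertices `u`, `v` of a colored directed graph (given by
its coloring function `f`) form a fork if there is `w` with edges `(u,w)`, `(v,w)`. -/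
def QFork {A : Type} {k : ℕ} (f : A → A → Option (Fin (k + 1))) (u v : A) : Prop :=
  u ≠ v ∧ f u v = none ∧ f v u = none ∧ ∃ w, (f u w).isSome ∧ (f v w).isSome

/-- `D` is an orientation of the edge-colored graph `G`; each edge keeps its color
(color `c` of `G` is represented by `Fin.succ c` in `D`). -/
def IsOrientation {V : Type} {k : ℕ} (G : EColGraph V k) (D : CDigraph V k) : Prop :=
  (∀ u v c, D.col u v = some c → ∃ c' : Fin k, c = Fin.succ c' ∧ G.col u v = some c') ∧
  (∀ u v (c : Fin k), G.col u v = some c →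
    D.col u v = some (Fin.succ c) ∨ D.col v u = some (Fin.succ c))

/-- `D'` is a fraternal augmentation of `D`: for every fork `u,v` of `D`, exactly one
of the edges `(u,v)`, `(v,u)` is added with the new color `0`, and no other edges are
added or changed. -/
def IsFraternalAug {V : Type} {k : ℕ} (D D' : CDigraph V k) : Prop :=
  (∀ u v c, D.col u v = some c → D'.col u v = some c) ∧
  (∀ u v, QFork D.col u v → D'.col u v = some 0 ∨ D'.col v u = some 0) ∧
  (∀ u v c, D'.col u v = some c →
    D.col u v = some c ∨ ((QFork D.col u v ∨ QFork D.col v u) ∧ c = 0))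

/-- `IsAug G h D`: `D` is an `h`-th augmentation of `G`, i.e. it is obtained from an
orientation of `G` by iterating fraternal augmentation `h` times. -/
def IsAug {V : Type} {k : ℕ} (G : EColGraph V k) : ℕ → CDigraph V k → Prop
  | 0, D => IsOrientation G D
  | n + 1, D => ∃ D', IsAug G n D' ∧ IsFraternalAug D' D

/-- `D'` is obtained from `D` by recoloring zeros: they differ only in the colors of
edges whose color in `D` is `0`. -/
def RecolorZeros {V : Type} {k : ℕ} (D D' : CDigraph V k) : Prop :=
  ∀ u v, D'.col u v = D.col u v ∨ (D.col u v = some 0 ∧ (D'.col u v).isSome)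

/-- A homomorphism of edge-colored (undirected) graphs. -/
def IsHom {V W : Type} {k : ℕ} (H : EColGraph V k) (G : EColGraph W k)
    (φ : V → W) : Prop :=
  ∀ u v c, H.col u v = some c → G.col (φ u) (φ v) = some c

/-- `hom(H,G)`: the number of homomorphisms between edge-colored undirected graphs. -/
noncomputable def homCount {V W : Type} {k : ℕ} (H : EColGraph V k) (G : EColGraph W k) : ℕ :=
  Nat.card {φ : V → W // IsHom H G φ}

/-- A partition `P` of the vertices of `D` is `0`-admissible: each part induces a
connected subgraph all of whose edges have color `0`, between two distinct parts all
edges go in the same direction, and they all have the same color. -/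
def ZeroAdmissible {V : Type} {k : ℕ} (D : CDigraph V k) (P : Setoid V) : Prop :=
  (∀ u v, P.r u v → ∀ c, D.col u v = some c → c = 0) ∧
  (∀ u v, P.r u v → Relation.ReflTransGen
      (fun a b => P.r a u ∧ P.r b u ∧ ((D.col a b).isSome ∨ (D.col b a).isSome)) u v) ∧
  (∀ u u' v v', P.r u u' → P.r v v' → ¬ P.r u v → (D.col u v).isSome → D.col v' u' = none) ∧
  (∀ u u' v v' c c', P.r u u' → P.r v v' → ¬ P.r u v →
    D.col u v = some c → D.col u' v' = some c' → c' = c)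

open Classical in
/-- The `0`-contraction of `D` corresponding to a partition `P`, encoded on the
original vertices: `rcol D P u v` is the color of the edge of the contraction from the
part of `u` to the part of `v` (and `none` if there is no such edge).  Together with
`P` this datum is exactly the `0`-contraction. -/
noncomputable def rcol {V : Type} {k : ℕ} (D : CDigraph V k) (P : Setoid V) :
    V → V → Option (Fin (k + 1)) :=
  fun u v =>
    if h : ¬ P.r u v ∧ ∃ c u' v', P.r u u' ∧ P.r v v' ∧ D.col u' v' = some c
    then some h.2.choose else none

/-- The number of homomorphisms from a `0`-contraction, given by a partition `P` of
`V` and its coloring `f` encoded on the original vertices, to the colored directed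
graph with coloring `Gc`: homomorphisms from the contraction correspond bijectively to
the maps `ψ : V → W` that are constant on the parts of `P` and map every edge of the
contraction to an edge of the same color. -/
noncomputable def contractionHomCount {V W : Type} {k : ℕ} (P : Setoid V)
    (f : V → V → Option (Fin (k + 1))) (Gc : W → W → Option (Fin (k + 1))) : ℕ :=
  Nat.card {ψ : V → W // (∀ u v, P.r u v → ψ u = ψ v) ∧
    ∀ u v c, f u v = some c → Gc (ψ u) (ψ v) = some c}

/-!
A homomorphism `φ : H → G` lifts along the augmentation `G'` of `G`: orient each edge of `H` as
`G'` orients its image and, at each fraternal step, orient each new edge as its image is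
oriented in the corresponding augmentation of `G` (arbitrarily if `φ` identifies its ends).
Recoloring the new edges by the colors of their images and contracting the components of the
edges that `φ` collapses gives some `H' ∈ H^e` through which `φ` is a homomorphism to `G'`.
Conversely, a homomorphism `H' → G'` is one `H → G`, since the edges of `H` keep their colors
in `H'`. The sum counts each `φ` only once because `H'` is determined by `φ`: a fraternal step
taken while a fork remains adds an edge, and a digraph with a fork has at least two edges and a
non-adjacent pair, so after `C(|V(H)|,2) − 2` steps no fork is left; in a fork-free
augmentation the parts and the edges of the contraction are then read off the `PotentialEdge`s
of `φ`, which do not depend on the augmentation.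
-/

open Relation Finset

section Development

variable {V W : Type} {k : ℕ}

section Forks

def ForkFree (f : V → V → Option (Fin (k + 1))) : Prop :=
  ∀ u v, ¬ QFork f u v

variable {f g : V → V → Option (Fin (k + 1))} {u v w : V}

theorem QFork.symm (h : QFork f u v) : QFork f v u :=
  ⟨h.1.symm, h.2.2.1, h.2.1, h.2.2.2.imp fun _ hw => ⟨hw.2, hw.1⟩⟩

theorem ForkFree.isSome_or (hf : ForkFree f) (huv : u ≠ v) (hu : (f u w).isSome)
    (hv : (f v w).isSome) : (f u v).isSome ∨ (f v u).isSome := by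
  by_contra! h
  simp only [Bool.not_eq_true, Option.isSome_eq_false_iff, Option.isNone_iff_eq_none] at h
  exact hf u v ⟨huv, h.1, h.2, w, hu, hv⟩

theorem ForkFree.congr (h : ∀ u v, (f u v).isSome ↔ (g u v).isSome) (hf : ForkFree f) :
    ForkFree g := by
  rintro u v ⟨huv, h1, h2, w, hu, hv⟩
  refine hf u v ⟨huv, ?_, ?_, w, (h u w).2 hu, (h v w).2 hv⟩ <;>
    rw [← Option.not_isSome_iff_eq_none, h] <;> simp [h1, h2]

end Forks

namespace IsAug

variable {G : EColGraph V k} {u v : V} {c : Fin k}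

theorem col_succ_or_col_succ : ∀ {n} {D : CDigraph V k}, IsAug G n D → G.col u v = some c →
    D.col u v = some c.succ ∨ D.col v u = some c.succ
  | 0, _, hD, h => hD.2 u v c h
  | _ + 1, _, ⟨_, hD', hf⟩, h => (col_succ_or_col_succ hD' h).imp (hf.1 _ _ _) (hf.1 _ _ _)

theorem col_of_col_succ : ∀ {n} {D : CDigraph V k}, IsAug G n D → D.col u v = some c.succ →
    G.col u v = some c
  | 0, _, hD, h => by
    obtain ⟨c', hc, hG⟩ := hD.1 u v _ h
    rwa [Fin.succ_inj.mp hc]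
  | _ + 1, _, ⟨_, hD', hf⟩, h => by
    rcases hf.2.2 u v _ h with h' | ⟨-, h0⟩
    · exact col_of_col_succ hD' h'
    · exact absurd h0 (Fin.succ_ne_zero c)

end IsAug

namespace IsFraternalAug

variable {D D' : CDigraph V k} {u v : V}

theorem isSome (hf : IsFraternalAug D D') (h : (D.col u v).isSome) : (D'.col u v).isSome := by
  obtain ⟨c, hc⟩ := Option.isSome_iff_exists.mp h
  simp [hf.1 u v c hc]

theorem col_eq_none (hf : IsFraternalAug D D') (h : D'.col u v = none) : D.col u v = none := by
  rw [← Option.not_isSome_iff_eq_none] at h ⊢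
  exact mt hf.isSome h

theorem forkFree (hf : IsFraternalAug D D') (hD : ForkFree D.col) : ForkFree D'.col := by
  rintro u v ⟨huv, h1, h2, w, hu, hv⟩
  have old : ∀ x, (D'.col x w).isSome → (D.col x w).isSome := fun x hx => by
    obtain ⟨c, hc⟩ := Option.isSome_iff_exists.mp hx
    rcases hf.2.2 x w c hc with h | ⟨h | h, -⟩
    · simp [h]
    · exact absurd h (hD _ _)
    · exact absurd h (hD _ _)
  exact hD u v ⟨huv, hf.col_eq_none h1, hf.col_eq_none h2, w, old u hu, old v hv⟩

theorem isSome_or (hf : IsFraternalAug D D') {x y z : V} (hxy : x ≠ y) (hx : (D.col x z).isSome)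
    (hy : (D.col y z).isSome) : (D'.col x y).isSome ∨ (D'.col y x).isSome := by
  by_cases h : (D.col x y).isSome ∨ (D.col y x).isSome
  · exact h.imp hf.isSome hf.isSome
  · simp only [not_or, Bool.not_eq_true, Option.isSome_eq_false_iff,
      Option.isNone_iff_eq_none] at h
    rcases hf.2.1 x y ⟨hxy, h.1, h.2, z, hx, hy⟩ with h' | h' <;> simp [h']

end IsFraternalAug

open Classical in
noncomputable def CDigraph.orientForks (D : CDigraph V k) (r : V → V → Prop)
    (hr : ∀ u v, r u v → ¬ r v u) : CDigraph V k where
  col u v := if QFork D.col u v ∧ r u v then some 0 else D.col u v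
  irrefl v := by rw [if_neg fun h => h.1.1 rfl, D.irrefl]
  asym u v h := by
    split_ifs at h with huv
    · rw [if_neg fun hvu => hr u v huv.2 hvu.2]
      exact huv.1.2.2.1
    · rw [if_neg fun hvu => by simp [hvu.1.2.2.1] at h]
      exact D.asym u v h

theorem CDigraph.isFraternalAug_orientForks (D : CDigraph V k) {r : V → V → Prop}
    (hr : ∀ u v, r u v → ¬ r v u) (hr_total : ∀ u v, QFork D.col u v → r u v ∨ r v u) :
    IsFraternalAug D (D.orientForks r hr) := by
  refine ⟨fun u v c hc => ?_, fun u v hq => ?_, fun u v c hc => ?_⟩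
  · simp only [orientForks]
    rw [if_neg fun h => by simp [h.1.2.1] at hc]
    exact hc
  · rcases hr_total u v hq with h | h
    · exact .inl (if_pos ⟨hq, h⟩)
    · exact .inr (if_pos ⟨hq.symm, h⟩)
  · simp only [orientForks] at hc
    split_ifs at hc with h
    · exact .inr ⟨.inl h.1, (Option.some_inj.1 hc).symm⟩
    · exact .inl hc

section EdgeCount

variable [Fintype V]

def CDigraph.edgeFinset (D : CDigraph V k) : Finset (V × V) :=
  {p | (D.col p.1 p.2).isSome}

variable {D D' : CDigraph V k}

@[simp]
theorem CDigraph.mem_edgeFinset {p : V × V} : p ∈ D.edgeFinset ↔ (D.col p.1 p.2).isSome := by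
  simp [edgeFinset]

theorem CDigraph.two_le_card_edgeFinset (hD : ¬ ForkFree D.col) : 2 ≤ #D.edgeFinset := by
  classical
  simp only [ForkFree, not_forall, not_not] at hD
  obtain ⟨u, v, huv, -, -, w, hu, hv⟩ := hD
  calc 2 = #{(u, w), (v, w)} := (card_pair (by simp [huv])).symm
    _ ≤ #D.edgeFinset := card_le_card (by simp [insert_subset_iff, hu, hv])

theorem CDigraph.card_edgeFinset_lt_choose (hD : ¬ ForkFree D.col) :
    #D.edgeFinset < (Fintype.card V).choose 2 := by
  classical
  simp only [ForkFree, not_forall, not_not] at hD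
  obtain ⟨u, v, huv, hnuv, hnvu, -⟩ := hD
  set pairs : Finset (Sym2 V) := {z | ¬ z.IsDiag}
  have hpairs : #pairs = (Fintype.card V).choose 2 := by
    rw [← Sym2.card_subtype_not_diag, Fintype.card_subtype]
  have hmem : s(u, v) ∈ pairs := by simpa [pairs] using huv
  have hle : #D.edgeFinset ≤ #(pairs.erase s(u, v)) := by
    refine card_le_card_of_injOn (fun p => s(p.1, p.2)) ?_ ?_
    · rintro ⟨a, b⟩ hab
      simp only [coe_erase, Set.mem_sdiff, mem_coe, Set.mem_singleton_iff, pairs, mem_filter,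
        mem_univ, true_and, Sym2.mk_isDiag_iff, Sym2.eq_iff]
      rw [mem_coe, CDigraph.mem_edgeFinset] at hab
      refine ⟨?_, ?_⟩
      · rintro rfl
        simp [D.irrefl] at hab
      · rintro (⟨rfl, rfl⟩ | ⟨rfl, rfl⟩) <;> simp_all
    · rintro ⟨a, b⟩ hab ⟨c, d⟩ hcd h
      simp only [mem_coe, CDigraph.mem_edgeFinset, Sym2.eq_iff] at hab hcd h
      rcases h with ⟨rfl, rfl⟩ | ⟨rfl, rfl⟩
      · rfl
      · simp [D.asym _ _ hcd] at hab
  rw [card_erase_of_mem hmem, hpairs] at hle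
  have : 0 < (Fintype.card V).choose 2 := hpairs ▸ card_pos.mpr ⟨_, hmem⟩
  omega

theorem IsFraternalAug.card_edgeFinset_lt (hf : IsFraternalAug D D') (hD : ¬ ForkFree D.col) :
    #D.edgeFinset < #D'.edgeFinset := by
  simp only [ForkFree, not_forall, not_not] at hD
  obtain ⟨u, v, hq⟩ := hD
  refine card_lt_card ⟨fun p hp => ?_, fun hsub => ?_⟩
  · simpa using hf.isSome (CDigraph.mem_edgeFinset.mp hp)
  · rcases hf.2.1 u v hq with h | h
    · simpa [hq.2.1] using hsub ((CDigraph.mem_edgeFinset (p := (u, v))).mpr (by simp [h]))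
    · simpa [hq.2.2.1] using hsub ((CDigraph.mem_edgeFinset (p := (v, u))).mpr (by simp [h]))

theorem IsAug.add_two_le_card_edgeFinset {G : EColGraph V k} :
    ∀ {n} {D : CDigraph V k}, IsAug G n D → ¬ ForkFree D.col → n + 2 ≤ #D.edgeFinset
  | 0, _, _, hD => by simpa using CDigraph.two_le_card_edgeFinset hD
  | _ + 1, _, ⟨_, hD', hf⟩, hD => by
    have hD'fork := mt hf.forkFree hD
    have := add_two_le_card_edgeFinset hD' hD'fork
    have := hf.card_edgeFinset_lt hD'fork
    omega

theorem IsAug.forkFree {G : EColGraph V k} (h : IsAug G ((Fintype.card V).choose 2 - 2) D) :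
    ForkFree D.col := by
  by_contra hD
  have := h.add_two_le_card_edgeFinset hD
  have := CDigraph.card_edgeFinset_lt_choose hD
  omega

end EdgeCount

section CommonAncestor

variable {α : Type*} {r : α → α → Prop}

theorem exists_common_ancestor_of_rel (hr : ∀ x y w, x ≠ y → r x w → r y w → r x y ∨ r y x)
    {x z ω : α} (hzω : ReflTransGen r z ω) (hxω : r x ω) :
    ∃ c, ReflTransGen r c x ∧ ReflTransGen r c z := by
  induction hzω generalizing x with
  | refl => exact ⟨x, .refl, .single hxω⟩
  | @tail y ω hzy hyω ih =>
    by_cases hxy : x = y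
    · exact ⟨z, hxy ▸ hzy, .refl⟩
    rcases hr x y ω hxy hxω hyω with h | h
    · exact ih h
    · exact ⟨z, hzy.tail h, .refl⟩

theorem exists_common_ancestor (hr : ∀ x y w, x ≠ y → r x w → r y w → r x y ∨ r y x)
    {a b : α} (hab : ReflTransGen (SymmGen r) a b) :
    ∃ c, ReflTransGen r c a ∧ ReflTransGen r c b := by
  induction hab with
  | refl => exact ⟨a, .refl, .refl⟩
  | tail _ hbd ih =>
    obtain ⟨z, hza, hzb⟩ := ih
    rcases hbd with h | h
    · exact ⟨z, hza, hzb.tail h⟩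
    · obtain ⟨c, hcd, hcz⟩ := exists_common_ancestor_of_rel hr hzb h
      exact ⟨c, hcz.trans hza, hcd⟩

end CommonAncestor

section Contraction

variable {D : CDigraph V k} {P : Setoid V} {u v w : V}

def PartEdge (D : CDigraph V k) (P : Setoid V) (a b : V) : Prop :=
  P a b ∧ (D.col a b).isSome

theorem ForkFree.partEdge_or (hD : ForkFree D.col) {x y : V} (hxy : x ≠ y)
    (hx : PartEdge D P x w) (hy : PartEdge D P y w) :
    PartEdge D P x y ∨ PartEdge D P y x :=
  have hr : P x y := P.trans' hx.1 (P.symm' hy.1)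
  (hD.isSome_or hxy hx.2 hy.2).imp (⟨hr, ·⟩) (⟨P.symm' hr, ·⟩)

namespace ZeroAdmissible

theorem rcol_eq_some_iff (hP : ZeroAdmissible D P) {c : Fin (k + 1)} : rcol D P u v = some c ↔
    ¬ P u v ∧ ∃ u' v', P u u' ∧ P v v' ∧ D.col u' v' = some c := by
  unfold rcol
  split_ifs with h
  · obtain ⟨u', v', hu', hv', hc⟩ := h.2.choose_spec
    refine ⟨fun hc' => ?_, fun ⟨huv, u'', v'', hu'', hv'', hc''⟩ => ?_⟩
    · exact ⟨h.1, u', v', hu', hv', Option.some_inj.mp hc' ▸ hc⟩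
    · rw [hP.2.2.2 u' u'' v' v'' _ _ (P.trans' (P.symm' hu') hu'') (P.trans' (P.symm' hv') hv'')
        (fun h' => huv (P.trans' hu' (P.trans' h' (P.symm' hv')))) hc hc'']
  · simp only [false_iff]
    exact fun ⟨huv, u', v', hu', hv', hc⟩ => h ⟨huv, _, u', v', hu', hv', hc⟩

theorem rcol_eq_some (hP : ZeroAdmissible D P) {c : Fin (k + 1)} (huv : ¬ P u v)
    (h : D.col u v = some c) : rcol D P u v = some c :=
  hP.rcol_eq_some_iff.2 ⟨huv, u, v, P.refl' u, P.refl' v, h⟩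

theorem isSome_rcol (hP : ZeroAdmissible D P) (huv : ¬ P u v) (h : (D.col u v).isSome) :
    (rcol D P u v).isSome := by
  obtain ⟨c, hc⟩ := Option.isSome_iff_exists.mp h
  simp [hP.rcol_eq_some huv hc]

theorem rcol_congr (hP : ZeroAdmissible D P) {u' v' : V} (hu : P u u') (hv : P v v') :
    rcol D P u v = rcol D P u' v' := by
  have key : ∀ {u v u' v' : V} (c : Fin (k + 1)), P u u' → P v v' →
      rcol D P u v = some c → rcol D P u' v' = some c := by
    intro u v u' v' c hu hv h
    obtain ⟨huv, x, y, hx, hy, hxy⟩ := hP.rcol_eq_some_iff.1 h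
    exact hP.rcol_eq_some_iff.2 ⟨fun h' => huv (P.trans' hu (P.trans' h' (P.symm' hv))), x, y,
      P.trans' (P.symm' hu) hx, P.trans' (P.symm' hv) hy, hxy⟩
  exact Option.ext fun c => ⟨key c hu hv, key c (P.symm' hu) (P.symm' hv)⟩

theorem reflTransGen_partEdge (hP : ZeroAdmissible D P) (h : P u v) :
    ReflTransGen (SymmGen (PartEdge D P)) u v :=
  ReflTransGen.mono (fun _ _ ⟨ha, hb, hab⟩ => hab.imp (⟨P.trans' ha (P.symm' hb), ·⟩)
    (⟨P.trans' hb (P.symm' ha), ·⟩)) _ _ (hP.2.1 u v h)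

theorem isSome_col_of_partEdge (hD : ForkFree D.col) (hP : ZeroAdmissible D P) {x z ω : V}
    (hzω : ReflTransGen (PartEdge D P) z ω) (hx : ¬ P x ω) (hxω : (D.col x ω).isSome) :
    (D.col x z).isSome := by
  induction hzω with
  | refl => exact hxω
  | @tail y ω _ hyω ih =>
    have hxy : ¬ P x y := fun h => hx (P.trans' h hyω.1)
    refine ih hxy ((hD.isSome_or (by rintro rfl; exact hxy (P.refl' x)) hxω hyω.2).resolve_right
      fun hyx => ?_)
    -- `y → x` would leave the part of `ω` against the direction of `x → ω`.
    simp [hP.2.2.1 y ω x x hyω.1 (P.refl' x) (fun h => hxy (P.symm' h)) hyx] at hxω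

/-- The `0`-contraction of a fork-free digraph is fork-free. -/
theorem rcol_isSome_or (hD : ForkFree D.col) (hP : ZeroAdmissible D P) (huv : ¬ P u v)
    (hu : (rcol D P u w).isSome) (hv : (rcol D P v w).isSome) :
    (rcol D P u v).isSome ∨ (rcol D P v u).isSome := by
  obtain ⟨cu, hcu⟩ := Option.isSome_iff_exists.mp hu
  obtain ⟨cv, hcv⟩ := Option.isSome_iff_exists.mp hv
  obtain ⟨huw, u', w₁, hu', hw₁, hu'w₁⟩ := hP.rcol_eq_some_iff.1 hcu
  obtain ⟨hvw, v', w₂, hv', hw₂, hv'w₂⟩ := hP.rcol_eq_some_iff.1 hcv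
  obtain ⟨z, hz₁, hz₂⟩ := exists_common_ancestor (fun _ _ _ => hD.partEdge_or)
    (hP.reflTransGen_partEdge (P.trans' (P.symm' hw₁) hw₂))
  have hu'z := isSome_col_of_partEdge hD hP hz₁
    (fun h => huw (P.trans' hu' (P.trans' h (P.symm' hw₁)))) (by simp [hu'w₁])
  have hv'z := isSome_col_of_partEdge hD hP hz₂
    (fun h => hvw (P.trans' hv' (P.trans' h (P.symm' hw₂)))) (by simp [hv'w₂])
  have hu'v' : ¬ P u' v' := fun h => huv (P.trans' hu' (P.trans' h (P.symm' hv')))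
  rw [hP.rcol_congr hu' hv', hP.rcol_congr hv' hu']
  exact (hD.isSome_or (by rintro rfl; exact hu'v' (P.refl' u')) hu'z hv'z).imp
    (hP.isSome_rcol hu'v') (hP.isSome_rcol fun h => hu'v' (P.symm' h))

end ZeroAdmissible

end Contraction

namespace RecolorZeros

variable {D D' : CDigraph V k} {u v : V}

theorem isSome_iff (h : RecolorZeros D D') : (D'.col u v).isSome ↔ (D.col u v).isSome := by
  rcases h u v with h | ⟨h1, h2⟩ <;> simp [*]

theorem col_eq (h : RecolorZeros D D') {c : Fin (k + 1)} (hc : D.col u v = some c)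
    (hc0 : c ≠ 0) : D'.col u v = some c := by
  rcases h u v with h | ⟨h1, -⟩
  · rw [h, hc]
  · exact absurd (Option.some_inj.mp (hc.symm.trans h1)) hc0

theorem forkFree (h : RecolorZeros D D') (hD : ForkFree D.col) : ForkFree D'.col :=
  hD.congr fun _ _ => h.isSome_iff.symm

end RecolorZeros

section Homomorphisms

variable {H : EColGraph V k} {G : EColGraph W k} {G' : CDigraph W k} {φ : V → W}

def IsRelaxedHom (φ : V → W) (D : CDigraph V k) (E : CDigraph W k) : Prop :=
  ∀ u v c, D.col u v = some c →
    E.col (φ u) (φ v) = some c ∨ c = 0 ∧ (φ u = φ v ∨ (E.col (φ u) (φ v)).isSome)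

theorem IsRelaxedHom.eq_or_isSome {D : CDigraph V k} {E : CDigraph W k}
    (hφ : IsRelaxedHom φ D E) {u v : V} (huv : (D.col u v).isSome) :
    φ u = φ v ∨ (E.col (φ u) (φ v)).isSome := by
  obtain ⟨c, hc⟩ := Option.isSome_iff_exists.mp huv
  rcases hφ u v c hc with h | ⟨-, h⟩
  · simp [h]
  · exact h

inductive PotentialEdge (H : EColGraph V k) (G' : CDigraph W k) (φ : V → W) : V → V → Prop
  | base {u v : V} {c : Fin k} : H.col u v = some c → G'.col (φ u) (φ v) = some c.succ →
      PotentialEdge H G' φ u v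
  | fork {a b w : V} : PotentialEdge H G' φ a w → PotentialEdge H G' φ b w → a ≠ b →
      φ a = φ b ∨ (G'.col (φ a) (φ b)).isSome → PotentialEdge H G' φ a b

theorem IsAug.potentialEdge : ∀ {n} {D : CDigraph V k}, IsAug H n D → IsRelaxedHom φ D G' →
    ∀ {u v}, (D.col u v).isSome → PotentialEdge H G' φ u v
  | 0, _, hD, hφ, u, v, huv => by
    obtain ⟨c, hc⟩ := Option.isSome_iff_exists.mp huv
    obtain ⟨c, rfl, hH⟩ := hD.1 u v _ hc
    exact .base hH ((hφ u v _ hc).resolve_right fun h => Fin.succ_ne_zero c h.1)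
  | _ + 1, _, ⟨_, hD', hf⟩, hφ, u, v, huv => by
    have hφ' : IsRelaxedHom φ _ G' := fun a b c h => hφ a b c (hf.1 a b c h)
    obtain ⟨c, hc⟩ := Option.isSome_iff_exists.mp huv
    rcases hf.2.2 u v c hc with h | ⟨hq | hq, -⟩
    · exact IsAug.potentialEdge hD' hφ' (by simp [h])
    · obtain ⟨huv', -, -, w, hu, hv⟩ := hq
      exact .fork (IsAug.potentialEdge hD' hφ' hu) (IsAug.potentialEdge hD' hφ' hv) huv'
        (hφ.eq_or_isSome huv)
    · obtain ⟨hvu', -, -, w, hv, hu⟩ := hq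
      exact .fork (IsAug.potentialEdge hD' hφ' hu) (IsAug.potentialEdge hD' hφ' hv) hvu'.symm
        (hφ.eq_or_isSome huv)

def IsContractionHom (P : Setoid V) (f : V → V → Option (Fin (k + 1)))
    (Gc : W → W → Option (Fin (k + 1))) (ψ : V → W) : Prop :=
  (∀ u v, P u v → ψ u = ψ v) ∧ ∀ u v c, f u v = some c → Gc (ψ u) (ψ v) = some c

def IsAugContraction (H : EColGraph V k) (n : ℕ)
    (x : Setoid V × (V → V → Option (Fin (k + 1)))) : Prop :=
  ∃ A H0 : CDigraph V k, IsAug H n A ∧ RecolorZeros A H0 ∧ ZeroAdmissible H0 x.1 ∧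
    x.2 = rcol H0 x.1

structure ContractionWitness (H : EColGraph V k) (n : ℕ) (G' : CDigraph W k) (φ : V → W) where
  A : CDigraph V k
  H0 : CDigraph V k
  P : Setoid V
  isAug : IsAug H n A
  recolorZeros : RecolorZeros A H0
  zeroAdmissible : ZeroAdmissible H0 P
  isContractionHom : IsContractionHom P (rcol H0 P) G'.col φ

theorem IsAugContraction.exists_witness {n : ℕ} {x : Setoid V × (V → V → Option (Fin (k + 1)))}
    (hx : IsAugContraction H n x) (hφ : IsContractionHom x.1 x.2 G'.col φ) :
    ∃ w : ContractionWitness H n G' φ, (w.P, rcol w.H0 w.P) = x := by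
  obtain ⟨A, H0, hA, hrz, hP, hx⟩ := hx
  exact ⟨⟨A, H0, x.1, hA, hrz, hP, hx ▸ hφ⟩, Prod.ext rfl hx.symm⟩

namespace ContractionWitness

variable {n : ℕ} (w : ContractionWitness H n G' φ) {u v : V}

theorem col_of_rcol {c : Fin (k + 1)} (h : rcol w.H0 w.P u v = some c) :
    G'.col (φ u) (φ v) = some c :=
  w.isContractionHom.2 u v c h

theorem isSome_of_isSome_rcol (h : (rcol w.H0 w.P u v).isSome) :
    (G'.col (φ u) (φ v)).isSome := by
  obtain ⟨c, hc⟩ := Option.isSome_iff_exists.mp h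
  simp [w.col_of_rcol hc]

theorem rcol_eq_of_col {c : Fin (k + 1)} (h : w.A.col u v = some c) (hc0 : c ≠ 0) :
    rcol w.H0 w.P u v = some c :=
  have h0 := w.recolorZeros.col_eq h hc0
  w.zeroAdmissible.rcol_eq_some (fun hr => hc0 (w.zeroAdmissible.1 _ _ hr _ h0)) h0

theorem rcol_succ_or {c : Fin k} (h : H.col u v = some c) :
    rcol w.H0 w.P u v = some c.succ ∨ rcol w.H0 w.P v u = some c.succ :=
  (w.isAug.col_succ_or_col_succ h).imp (w.rcol_eq_of_col · (Fin.succ_ne_zero c))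
    (w.rcol_eq_of_col · (Fin.succ_ne_zero c))

theorem isHom (w : ContractionWitness H n G' φ) {m : ℕ} (hG' : IsAug G m G') :
    IsHom H G φ := by
  intro u v c h
  rcases w.rcol_succ_or h with h' | h'
  · exact hG'.col_of_col_succ (w.col_of_rcol h')
  · rw [G.symm]
    exact hG'.col_of_col_succ (w.col_of_rcol h')

theorem isRelaxedHom : IsRelaxedHom φ w.A G' := by
  intro u v c hc
  by_cases hc0 : c = 0
  · refine .inr ⟨hc0, ?_⟩
    by_cases huv : w.P u v
    · exact .inl (w.isContractionHom.1 u v huv)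
    · have hs : (w.H0.col u v).isSome := w.recolorZeros.isSome_iff.2 (by simp [hc])
      exact .inr (w.isSome_of_isSome_rcol (w.zeroAdmissible.isSome_rcol huv hs))
  · exact .inl (w.col_of_rcol (w.rcol_eq_of_col hc hc0))

theorem potentialEdge (h : (w.H0.col u v).isSome) : PotentialEdge H G' φ u v :=
  w.isAug.potentialEdge w.isRelaxedHom (w.recolorZeros.isSome_iff.1 h)

theorem rel_or_isSome_rcol (hff : ForkFree w.H0.col) {a b : V}
    (h : PotentialEdge H G' φ a b) : w.P a b ∨ (rcol w.H0 w.P a b).isSome := by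
  have hadm := w.zeroAdmissible
  induction h with
  | @base u v c hH hG =>
    rcases w.rcol_succ_or hH with h | h
    · exact .inr (by simp [h])
    · have hvu : (G'.col (φ v) (φ u)).isSome := by simp [w.col_of_rcol h]
      simp [G'.asym _ _ hvu] at hG
  | @fork a b x _ _ _ hab iha ihb =>
    have hba : ¬ (rcol w.H0 w.P b a).isSome := fun h => by
      have := w.isSome_of_isSome_rcol h
      rcases hab with e | e
      · simp [e, G'.irrefl] at this
      · simp [G'.asym _ _ e] at this
    rcases iha with ha | ha <;> rcases ihb with hb | hb
    · exact .inl (w.P.trans' ha (w.P.symm' hb))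
    · exact absurd (by rwa [hadm.rcol_congr (w.P.refl' b) ha]) hba
    · exact .inr (by rwa [hadm.rcol_congr (w.P.refl' a) hb])
    · by_cases hr : w.P a b
      · exact .inl hr
      · exact .inr ((hadm.rcol_isSome_or hff hr ha hb).resolve_right hba)

theorem rel_of_potentialEdge (hff : ForkFree w.H0.col) {a b : V} (he : φ a = φ b)
    (h : PotentialEdge H G' φ a b) : w.P a b :=
  (w.rel_or_isSome_rcol hff h).resolve_right fun hs => by
    simpa [he, G'.irrefl] using w.isSome_of_isSome_rcol hs

theorem rel_iff (hff : ForkFree w.H0.col) : w.P u v ↔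
    ReflTransGen (fun a b => φ a = φ b ∧ SymmGen (PotentialEdge H G' φ) a b) u v := by
  constructor
  · intro h
    refine ReflTransGen.mono (fun a b hab => ⟨?_, hab.imp ?_ ?_⟩) _ _
      (w.zeroAdmissible.reflTransGen_partEdge h)
    · rcases hab with hab | hab
      exacts [w.isContractionHom.1 _ _ hab.1, (w.isContractionHom.1 _ _ hab.1).symm]
    · exact fun hab => w.potentialEdge hab.2
    · exact fun hab => w.potentialEdge hab.2
  · intro h
    induction h with
    | refl => exact w.P.refl' u
    | tail _ hbc ih =>
      refine w.P.trans' ih (hbc.2.elim (w.rel_of_potentialEdge hff hbc.1)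
        fun h => w.P.symm' (w.rel_of_potentialEdge hff hbc.1.symm h))

open Classical in
theorem rcol_eq (hff : ForkFree w.H0.col) : rcol w.H0 w.P = fun u v =>
    if ¬ w.P u v ∧ ∃ a b, w.P u a ∧ w.P v b ∧ PotentialEdge H G' φ a b
    then G'.col (φ u) (φ v) else none := by
  funext u v
  split_ifs with h
  · obtain ⟨huv, a, b, ha, hb, hab⟩ := h
    obtain ⟨c, hc⟩ := Option.isSome_iff_exists.mp ((w.rel_or_isSome_rcol hff hab).resolve_left
      fun h => huv (w.P.trans' ha (w.P.trans' h (w.P.symm' hb))))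
    rw [← w.zeroAdmissible.rcol_congr ha hb] at hc
    rw [hc, w.col_of_rcol hc]
  · rw [Option.eq_none_iff_forall_ne_some]
    intro c hc
    obtain ⟨huv, a, b, ha, hb, hab⟩ := w.zeroAdmissible.rcol_eq_some_iff.1 hc
    exact h ⟨huv, a, b, ha, hb, w.potentialEdge (by simp [hab])⟩

theorem contraction_eq (w₁ w₂ : ContractionWitness H n G' φ) (h₁ : ForkFree w₁.H0.col)
    (h₂ : ForkFree w₂.H0.col) : (w₁.P, rcol w₁.H0 w₁.P) = (w₂.P, rcol w₂.H0 w₂.P) := by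
  have hP : w₁.P = w₂.P := Setoid.ext fun u v => (w₁.rel_iff h₁).trans (w₂.rel_iff h₂).symm
  rw [w₁.rcol_eq h₁, w₂.rcol_eq h₂, hP]

end ContractionWitness

theorem IsAugContraction.eq_of_isContractionHom {n : ℕ} (hn : ∀ A, IsAug H n A → ForkFree A.col)
    {x y : Setoid V × (V → V → Option (Fin (k + 1)))} (hx : IsAugContraction H n x)
    (hy : IsAugContraction H n y) (hφx : IsContractionHom x.1 x.2 G'.col φ)
    (hφy : IsContractionHom y.1 y.2 G'.col φ) : x = y := by
  obtain ⟨w₁, rfl⟩ := hx.exists_witness hφx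
  obtain ⟨w₂, rfl⟩ := hy.exists_witness hφy
  exact w₁.contraction_eq w₂ (w₁.recolorZeros.forkFree (hn _ w₁.isAug))
    (w₂.recolorZeros.forkFree (hn _ w₂.isAug))

theorem IsHom.exists_orientation_isRelaxedHom (hφ : IsHom H G φ) {E : CDigraph W k}
    (hE : IsOrientation G E) : ∃ D : CDigraph V k, IsOrientation H D ∧ IsRelaxedHom φ D E := by
  classical
  let D : CDigraph V k :=
    { col := fun u v => if E.col (φ u) (φ v) = (H.col u v).map Fin.succ
        then (H.col u v).map Fin.succ else none
      irrefl := fun v => by simp [H.irrefl]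
      asym := fun u v h => by
        split_ifs at h with huv
        · have huv' : (E.col (φ u) (φ v)).isSome := huv ▸ h
          rw [if_neg]
          rw [H.symm v u, ← huv, E.asym _ _ huv']
          intro hvu
          simp [← hvu] at huv'
        · simp at h }
  refine ⟨D, ⟨fun u v c hc => ?_, fun u v c hc => ?_⟩, fun u v c hc => ?_⟩
  · simp only [D] at hc
    split_ifs at hc
    obtain ⟨c', hc', rfl⟩ := Option.map_eq_some_iff.1 hc
    exact ⟨c', rfl, hc'⟩
  · simp only [D]
    rcases hE.2 _ _ c (hφ u v c hc) with h | h
    · simp [h, hc]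
    · simp [h, H.symm v u, hc]
  · simp only [D] at hc
    split_ifs at hc with h
    exact .inl (h.trans hc)

theorem IsRelaxedHom.isSome_or_of_qFork {D : CDigraph V k} {E E' : CDigraph W k}
    (hφ : IsRelaxedHom φ D E) (hE : IsFraternalAug E E') {u v : V} (hq : QFork D.col u v)
    (hne : φ u ≠ φ v) : (E'.col (φ u) (φ v)).isSome ∨ (E'.col (φ v) (φ u)).isSome := by
  obtain ⟨-, -, -, w, hu, hv⟩ := hq
  rcases hφ.eq_or_isSome hu with hu' | hu' <;> rcases hφ.eq_or_isSome hv with hv' | hv'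
  · exact absurd (hu'.trans hv'.symm) hne
  · exact .inr (hE.isSome (by rwa [hu']))
  · exact .inl (hE.isSome (by rwa [hv']))
  · exact hE.isSome_or hne hu' hv'

theorem IsRelaxedHom.exists_fraternalAug {D : CDigraph V k} {E E' : CDigraph W k}
    (hφ : IsRelaxedHom φ D E) (hE : IsFraternalAug E E') :
    ∃ D', IsFraternalAug D D' ∧ IsRelaxedHom φ D' E' := by
  classical
  -- A fork that `φ` collapses is oriented by an arbitrary strict total order, any other fork
  -- as its image is oriented in `E'`.
  let r : V → V → Prop := fun u v =>
    if φ u = φ v then WellOrderingRel u v else (E'.col (φ u) (φ v)).isSome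
  have hr : ∀ u v, r u v → ¬ r v u := by
    intro u v huv hvu
    by_cases he : φ u = φ v
    · simp only [r, if_pos he, if_pos he.symm] at huv hvu
      exact asymm_of WellOrderingRel huv hvu
    · simp only [r, if_neg he, if_neg (Ne.symm he)] at huv hvu
      simp [E'.asym _ _ huv] at hvu
  have hr_total : ∀ u v, QFork D.col u v → r u v ∨ r v u := by
    intro u v hq
    by_cases he : φ u = φ v
    · simp only [r, if_pos he, if_pos he.symm]
      rcases trichotomous_of WellOrderingRel u v with h | h | h
      exacts [.inl h, absurd h hq.1, .inr h]
    · simp only [r, if_neg he, if_neg (Ne.symm he)]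
      exact hφ.isSome_or_of_qFork hE hq he
  refine ⟨D.orientForks r hr, D.isFraternalAug_orientForks hr hr_total, fun u v c hc => ?_⟩
  simp only [CDigraph.orientForks] at hc
  split_ifs at hc with h
  · cases hc
    by_cases he : φ u = φ v
    · exact .inr ⟨rfl, .inl he⟩
    · have hp := h.2
      simp only [r, if_neg he] at hp
      exact .inr ⟨rfl, .inr hp⟩
  · rcases hφ u v c hc with h' | ⟨hc0, h'⟩
    · exact .inl (hE.1 _ _ _ h')
    · exact .inr ⟨hc0, h'.imp_right hE.isSome⟩

theorem IsHom.exists_isAug_isRelaxedHom (hφ : IsHom H G φ) :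
    ∀ {n} {E : CDigraph W k}, IsAug G n E → ∃ D, IsAug H n D ∧ IsRelaxedHom φ D E
  | 0, _, hE => hφ.exists_orientation_isRelaxedHom hE
  | _ + 1, _, ⟨_, hE, hf⟩ =>
    have ⟨D, hD, hDE⟩ := hφ.exists_isAug_isRelaxedHom hE
    have ⟨D', hDD', hD'⟩ := hDE.exists_fraternalAug hf
    ⟨D', ⟨D, hD, hDD'⟩, hD'⟩

section Collapse

variable {D : CDigraph V k} {E : CDigraph W k}

open Classical in
noncomputable def recolorAlong (φ : V → W) (D : CDigraph V k) (E : CDigraph W k) :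
    CDigraph V k where
  col u v := if D.col u v = some 0 ∧ φ u ≠ φ v ∧ (E.col (φ u) (φ v)).isSome
    then E.col (φ u) (φ v) else D.col u v
  irrefl v := by simp [D.irrefl]
  asym u v h := by
    have hs : (D.col u v).isSome := by
      split_ifs at h with huv
      · simp [huv.1]
      · exact h
    simp [D.asym u v hs]

theorem recolorZeros_recolorAlong : RecolorZeros D (recolorAlong φ D E) := by
  intro u v
  simp only [recolorAlong]
  split_ifs with h
  · exact .inr ⟨h.1, h.2.2⟩
  · exact .inl rfl

def IsCollapsingHom (φ : V → W) (D : CDigraph V k) (E : CDigraph W k) : Prop :=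
  ∀ u v c, D.col u v = some c → E.col (φ u) (φ v) = some c ∨ φ u = φ v ∧ c = 0

theorem IsRelaxedHom.isCollapsingHom_recolorAlong (hφ : IsRelaxedHom φ D E) :
    IsCollapsingHom φ (recolorAlong φ D E) E := by
  intro u v c hc
  simp only [recolorAlong] at hc
  split_ifs at hc with h
  · exact .inl hc
  · rcases hφ u v c hc with h' | ⟨rfl, h'⟩
    · exact .inl h'
    · by_cases he : φ u = φ v
      · exact .inr ⟨he, rfl⟩
      · exact absurd ⟨hc, he, h'.resolve_left he⟩ h

def collapsedComponents (φ : V → W) (D : CDigraph V k) : Setoid V :=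
  EqvGen.setoid fun a b => φ a = φ b ∧ (D.col a b).isSome

theorem collapsedComponents_apply_eq {u v : V} (h : collapsedComponents φ D u v) :
    φ u = φ v := by
  induction h with
  | rel _ _ h => exact h.1
  | refl => rfl
  | symm _ _ _ ih => exact ih.symm
  | trans _ _ _ _ _ h₁ h₂ => exact h₁.trans h₂

namespace IsCollapsingHom

theorem col_of_not_rel (hD : IsCollapsingHom φ D E) {u v : V} {c : Fin (k + 1)}
    (huv : ¬ collapsedComponents φ D u v) (h : D.col u v = some c) :
    E.col (φ u) (φ v) = some c :=
  (hD u v c h).resolve_right fun he => huv (EqvGen.rel _ _ ⟨he.1, by simp [h]⟩)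

theorem zeroAdmissible (hD : IsCollapsingHom φ D E) :
    ZeroAdmissible D (collapsedComponents φ D) := by
  set P := collapsedComponents φ D
  refine ⟨fun u v huv c hc => ?_, fun u v huv => ?_, fun u u' v v' hu hv huv hs => ?_,
    fun u u' v v' c c' hu hv huv hc hc' => ?_⟩
  · rcases hD u v c hc with h | h
    · simp [collapsedComponents_apply_eq huv, E.irrefl] at h
    · exact h.2
  · have toP : ∀ {a b}, ReflTransGen (SymmGen fun a b => φ a = φ b ∧ (D.col a b).isSome) a b →
        P a b := fun h => by rwa [EqvGen.reflTransGen_symmGen] at h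
    have h : ReflTransGen (SymmGen fun a b => φ a = φ b ∧ (D.col a b).isSome) u v := by
      rwa [EqvGen.reflTransGen_symmGen]
    clear huv
    induction h with
    | refl => exact .refl
    | tail hub hbc ih =>
      exact ih.tail ⟨P.symm' (toP hub), P.symm' (toP (hub.tail hbc)), hbc.imp And.right And.right⟩
  · obtain ⟨c, hc⟩ := Option.isSome_iff_exists.mp hs
    have hE := hD.col_of_not_rel huv hc
    rw [← Option.not_isSome_iff_eq_none]
    intro hs'
    obtain ⟨c', hc'⟩ := Option.isSome_iff_exists.mp hs'
    have hE' :=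
      hD.col_of_not_rel (fun h => huv (P.trans' hu (P.trans' (P.symm' h) (P.symm' hv)))) hc'
    rw [← collapsedComponents_apply_eq hu, ← collapsedComponents_apply_eq hv] at hE'
    simp [E.asym (φ u) (φ v) (by simp [hE])] at hE'
  · have hE' := hD.col_of_not_rel (fun h => huv (P.trans' hu (P.trans' h (P.symm' hv)))) hc'
    rw [← collapsedComponents_apply_eq hu, ← collapsedComponents_apply_eq hv,
      hD.col_of_not_rel huv hc] at hE'
    exact (Option.some_inj.1 hE').symm

theorem isContractionHom (hD : IsCollapsingHom φ D E) :
    IsContractionHom (collapsedComponents φ D) (rcol D (collapsedComponents φ D)) E.col φ := by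
  refine ⟨fun u v => collapsedComponents_apply_eq, fun u v c hc => ?_⟩
  obtain ⟨huv, u', v', hu, hv, hc'⟩ := hD.zeroAdmissible.rcol_eq_some_iff.1 hc
  set P := collapsedComponents φ D
  rw [collapsedComponents_apply_eq hu, collapsedComponents_apply_eq hv]
  exact hD.col_of_not_rel (fun h => huv (P.trans' hu (P.trans' h (P.symm' hv)))) hc'

end IsCollapsingHom

theorem IsHom.exists_isAugContraction (hφ : IsHom H G φ) {n : ℕ} (hG' : IsAug G n G') :
    ∃ x, IsAugContraction H n x ∧ IsContractionHom x.1 x.2 G'.col φ := by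
  obtain ⟨A, hA, hAφ⟩ := hφ.exists_isAug_isRelaxedHom hG'
  have hcol := hAφ.isCollapsingHom_recolorAlong
  exact ⟨(_, _), ⟨A, _, hA, recolorZeros_recolorAlong, hcol.zeroAdmissible, rfl⟩,
    hcol.isContractionHom⟩

end Collapse

end Homomorphisms

end Development

instance Setoid.finite {α : Type*} [Finite α] : Finite (Setoid α) :=
  Finite.of_injective _ fun (r s : Setoid α) (h : ⇑r = ⇑s) => Setoid.ext fun _ _ => by rw [h]

theorem Nat.card_eq_finsum_card_of_existsUnique {α ι : Type*} [Finite α] [Finite ι]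
    {q : α → Prop} {p : ι → α → Prop} (hp : ∀ i a, p i a → q a) (hq : ∀ a, q a → ∃! i, p i a) :
    Nat.card {a // q a} = ∑ᶠ i, Nat.card {a // p i a} := by
  have := Fintype.ofFinite ι
  rw [finsum_eq_sum_of_fintype, ← Nat.card_sigma]
  exact Nat.card_congr
    { toFun := fun a => ⟨(hq a a.2).choose, a, (hq a a.2).choose_spec.1⟩
      invFun := fun x => ⟨x.2, hp _ _ x.2.2⟩
      left_inv := fun _ => rfl
      right_inv := fun ⟨i, a, ha⟩ =>
        Sigma.subtype_ext ((hq a (hp i a ha)).choose_spec.2 i ha).symm rfl }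

/-- Let `H`, `G` be graphs with edges colored by `{1,…,k}`, `h = C(|V(H)|,2) − 2`, and
let `G'` be an `h`-th augmentation of `G`.  Then `hom(H,G) = Σ_{H' ∈ H^e} hom(H',G')`,
where `H^e` is the set of all `0`-contractions (encoded as pairs: partition of `V(H)`
together with the induced coloring) of graphs obtained by recoloring zeros from `h`-th
augmentations of `H`. -/
theorem hom_eq_sum_contractions {V W : Type} [Fintype V] [Fintype W] {k : ℕ}
    (H : EColGraph V k) (G : EColGraph W k) (G' : CDigraph W k)
    (hG' : IsAug G (Nat.choose (Fintype.card V) 2 - 2) G') :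
    homCount H G =
      ∑ᶠ x : {x : Setoid V × (V → V → Option (Fin (k + 1))) //
          ∃ A H0 : CDigraph V k,
            IsAug H (Nat.choose (Fintype.card V) 2 - 2) A ∧ RecolorZeros A H0 ∧
            ZeroAdmissible H0 x.1 ∧ x.2 = rcol H0 x.1},
        contractionHomCount x.1.1 x.1.2 G'.col := by
  unfold homCount contractionHomCount
  refine Nat.card_eq_finsum_card_of_existsUnique (fun x φ hφ => ?_) fun φ hφ => ?_
  · obtain ⟨w, -⟩ := IsAugContraction.exists_witness x.2 hφ
    exact w.isHom hG'
  · obtain ⟨x, hx, hφx⟩ := hφ.exists_isAugContraction hG'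
    exact ⟨⟨x, hx⟩, hφx, fun y hφy => Subtype.ext <|
      IsAugContraction.eq_of_isContractionHom (fun _ => IsAug.forkFree) y.2 hx hφy hφx⟩
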